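/- (Theorem 3.2) The BlockRR mechanism satisfies ε-label differential privacy: for all labels y, y' ∈ S and all privatized labels ỹ ∈ S̃, the transition probabilities satisfy p(y, ỹ) ≤ e^ε · p(y', ỹ). -/

import Mathlib

/-!
For a fixed privatized label `z`, every entry `p y z` of its column lies in `[m, e^ε m]` with
`m ≥ 0`, where `m = β` on `T₁` and `m = γ` on `T₂`; hence `p y z ≤ e^ε m ≤ e^ε p y' z`. Apart from
`m` and `e^ε m`, the only entry is `1/s` on `Δ`, and `β ≤ 1/s ≤ e^ε β` becomes visible once
`κ = (e^ε - 1)² b² + (e^ε - 1) b s + l s₂`: then `β κ s = (e^ε - 1) b s + l s₂` falls short of `κ`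
by `(e^ε - 1)² b²`.
-/

open Finset

namespace BlockRR

noncomputable def kappa (E b l s₁ s₂ : ℝ) : ℝ := (E * b + s₁ - b) * (E * b + s₂ - b) - (s₁ - l) * s₂

noncomputable def beta (E b l s₁ s₂ : ℝ) : ℝ := ((E - 1) * b + l * s₂ / (s₁ + s₂)) / kappa E b l s₁ s₂

noncomputable def gamma (E b l s₁ s₂ : ℝ) : ℝ :=
  (((E - 1) * b + l) - (l / (s₁ + s₂)) * ((E - 1) * b + s₁)) / kappa E b l s₁ s₂

variable {E b l s₁ s₂ : ℝ}

theorem kappa_eq (E b l s₁ s₂ : ℝ) :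
    kappa E b l s₁ s₂ = (E - 1) ^ 2 * b ^ 2 + (E - 1) * b * (s₁ + s₂) + l * s₂ := by
  unfold kappa; ring

theorem kappa_pos (hE : 1 < E) (hb : 0 < b) (hl : 0 ≤ l) (hs₂ : 0 ≤ s₂) (hs : 0 ≤ s₁ + s₂) :
    0 < kappa E b l s₁ s₂ := by
  have hE₁ : 0 < E - 1 := sub_pos.2 hE
  rw [kappa_eq]
  positivity

theorem beta_mul_kappa_mul (hκ : kappa E b l s₁ s₂ ≠ 0) (hs : s₁ + s₂ ≠ 0) :
    beta E b l s₁ s₂ * kappa E b l s₁ s₂ * (s₁ + s₂) = (E - 1) * b * (s₁ + s₂) + l * s₂ := by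
  unfold beta
  field_simp

theorem beta_nonneg (hE : 1 < E) (hb : 0 < b) (hl : 0 ≤ l) (hs₂ : 0 ≤ s₂) (hs : 0 ≤ s₁ + s₂) :
    0 ≤ beta E b l s₁ s₂ := by
  have hE₁ : 0 < E - 1 := sub_pos.2 hE
  have := kappa_pos hE hb hl hs₂ hs
  unfold beta
  positivity

theorem gamma_nonneg (hE : 1 < E) (hb : 0 < b) (hl : 0 ≤ l) (hl₁ : l ≤ s₁) (hs₂ : 0 ≤ s₂)
    (hs : 0 < s₁ + s₂) : 0 ≤ gamma E b l s₁ s₂ := by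
  have hE₁ : 0 < E - 1 := sub_pos.2 hE
  have hnum : (((E - 1) * b + l) - (l / (s₁ + s₂)) * ((E - 1) * b + s₁)) * (s₁ + s₂)
      = (E - 1) * b * (s₁ + s₂ - l) + l * s₂ := by
    field_simp
    ring
  have hnum_nonneg : 0 ≤ ((E - 1) * b + l) - (l / (s₁ + s₂)) * ((E - 1) * b + s₁) := by
    refine nonneg_of_mul_nonneg_left ?_ hs
    rw [hnum]
    have : 0 ≤ s₁ + s₂ - l := by linarith
    positivity
  exact div_nonneg hnum_nonneg (kappa_pos hE hb hl hs₂ hs.le).le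

theorem beta_le_inv (hE : 1 < E) (hb : 0 < b) (hl : 0 ≤ l) (hs₂ : 0 ≤ s₂) (hs : 0 < s₁ + s₂) :
    beta E b l s₁ s₂ ≤ 1 / (s₁ + s₂) := by
  have hκ := kappa_pos hE hb hl hs₂ hs.le
  rw [le_div_iff₀ hs, ← mul_le_mul_iff_left₀ hκ, one_mul, mul_right_comm,
    beta_mul_kappa_mul hκ.ne' hs.ne', kappa_eq]
  nlinarith [sq_nonneg ((E - 1) * b)]

theorem inv_le_mul_beta (hE : 1 < E) (hb : 0 < b) (hl : 0 ≤ l) (hs₂ : 0 ≤ s₂)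
    (hbs : b ≤ s₁ + s₂) : 1 / (s₁ + s₂) ≤ E * beta E b l s₁ s₂ := by
  have hs : 0 < s₁ + s₂ := hb.trans_le hbs
  have hκ := kappa_pos hE hb hl hs₂ hs.le
  rw [div_le_iff₀ hs, ← mul_le_mul_iff_left₀ hκ, one_mul,
    show E * beta E b l s₁ s₂ * (s₁ + s₂) * kappa E b l s₁ s₂
      = E * (beta E b l s₁ s₂ * kappa E b l s₁ s₂ * (s₁ + s₂)) by ring,
    beta_mul_kappa_mul hκ.ne' hs.ne', kappa_eq]
  have hE₁ : 0 < E - 1 := sub_pos.2 hE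
  have hsb : 0 ≤ s₁ + s₂ - b := sub_nonneg.2 hbs
  -- `E · (numerator) - κ = (E - 1)² b (s - b) + (E - 1) l s₂`
  nlinarith [mul_nonneg (mul_nonneg (sq_nonneg (E - 1)) hb.le) hsb,
    mul_nonneg hE₁.le (mul_nonneg hl hs₂)]

variable {α : Type*} [DecidableEq α] {T₁ Δ B : Finset α} {β γ x : ℝ} {z : α}

theorem rowS₁_mem_Icc (hB : B ⊆ T₁) (hE : 1 ≤ E) (hβ : 0 ≤ β) (hγ : 0 ≤ γ) :
    (if z ∈ B then E * β else if z ∈ T₁ then β else γ) ∈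
      Set.Icc (if z ∈ T₁ then β else γ) (E * if z ∈ T₁ then β else γ) := by
  have hEβ : β ≤ E * β := le_mul_of_one_le_left hβ hE
  have hEγ : γ ≤ E * γ := le_mul_of_one_le_left hγ hE
  by_cases hzB : z ∈ B
  · simp [hzB, hB hzB, hEβ]
  · split_ifs <;> simp [*]

theorem rowS₂_mem_Icc (hΔ : Δ ⊆ T₁) (hE : 1 ≤ E) (hβ : 0 ≤ β) (hγ : 0 ≤ γ)
    (hβx : β ≤ x) (hxβ : x ≤ E * β) :
    (if z ∈ Δ then x else if z ∈ T₁ then β else if z ∈ B then E * γ else γ) ∈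
      Set.Icc (if z ∈ T₁ then β else γ) (E * if z ∈ T₁ then β else γ) := by
  have hEβ : β ≤ E * β := le_mul_of_one_le_left hβ hE
  have hEγ : γ ≤ E * γ := le_mul_of_one_le_left hγ hE
  by_cases hzΔ : z ∈ Δ
  · simp [hzΔ, hΔ hzΔ, hβx, hxβ]
  · split_ifs <;> simp [*]

end BlockRR

theorem blockRR_label_dp_general {α : Type*} [DecidableEq α]
    (S₁ S₂ T₁ T₂ Δ : Finset α)
    (ε : ℝ) (hε : 0 < ε) (b l : ℕ) (hb : 1 ≤ b)
    (B : α → Finset α)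
    (hB₁ : ∀ y ∈ S₁, B y ⊆ T₁ ∧ (B y).card = b)
    (hB₂ : ∀ y ∈ S₂, B y ⊆ T₂ ∧ (B y).card = b)
    (hΔ : Δ ⊆ T₁) (hΔcard : Δ.card = l)
    (s₁ s₂ s κ β γ : ℝ)
    (hs₁ : s₁ = T₁.card) (hs₂ : s₂ = T₂.card) (hsdef : s = s₁ + s₂)
    (hκ : κ = (Real.exp ε * b + s₁ - b) * (Real.exp ε * b + s₂ - b) - (s₁ - l) * s₂)
    (hβ : β = ((Real.exp ε - 1) * b + l * s₂ / s) / κ)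
    (hγ : γ = (((Real.exp ε - 1) * b + l) - (l / s) * ((Real.exp ε - 1) * b + s₁)) / κ)
    (p : α → α → ℝ)
    (hp : ∀ y ∈ S₁ ∪ S₂, ∀ z ∈ T₁ ∪ T₂,
      p y z = if y ∈ S₁ then
          (if z ∈ B y then Real.exp ε * β else if z ∈ T₁ then β else γ)
        else
          (if z ∈ Δ then 1 / s else if z ∈ T₁ then β
            else if z ∈ B y then Real.exp ε * γ else γ)) :
    ∀ y ∈ S₁ ∪ S₂, ∀ y' ∈ S₁ ∪ S₂, ∀ z ∈ T₁ ∪ T₂,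
      p y z ≤ Real.exp ε * p y' z := by
  intro y hy y' hy' z hz
  subst hsdef hκ
  obtain rfl : β = BlockRR.beta (Real.exp ε) b l s₁ s₂ := hβ
  obtain rfl : γ = BlockRR.gamma (Real.exp ε) b l s₁ s₂ := hγ
  have hE : 1 < Real.exp ε := Real.one_lt_exp_iff.2 hε
  have hb₀ : (0 : ℝ) < b := by exact_mod_cast hb
  have hl : (l : ℝ) ≤ s₁ := by rw [hs₁, ← hΔcard]; exact_mod_cast card_le_card hΔ
  have hs₁₀ : 0 ≤ s₁ := hs₁ ▸ Nat.cast_nonneg _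
  have hs₂₀ : 0 ≤ s₂ := hs₂ ▸ Nat.cast_nonneg _
  have hs : 0 < s₁ + s₂ := by
    rw [hs₁, hs₂]
    exact_mod_cast (card_pos.2 ⟨z, hz⟩).trans_le (card_union_le T₁ T₂)
  have hβ₀ := BlockRR.beta_nonneg hE hb₀ l.cast_nonneg hs₂₀ hs.le
  have hγ₀ := BlockRR.gamma_nonneg hE hb₀ l.cast_nonneg hl hs₂₀ hs
  set m := if z ∈ T₁ then BlockRR.beta (Real.exp ε) b l s₁ s₂
    else BlockRR.gamma (Real.exp ε) b l s₁ s₂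
  have hcol : ∀ w ∈ S₁ ∪ S₂, p w z ∈ Set.Icc m (Real.exp ε * m) := by
    intro w hw
    rw [hp w hw z hz]
    by_cases hw₁ : w ∈ S₁
    · rw [if_pos hw₁]
      exact BlockRR.rowS₁_mem_Icc (hB₁ w hw₁).1 hE.le hβ₀ hγ₀
    · rw [if_neg hw₁]
      obtain ⟨hBw, hBcard⟩ := hB₂ w ((mem_union.1 hw).resolve_left hw₁)
      have hbs₂ : (b : ℝ) ≤ s₂ := by rw [hs₂, ← hBcard]; exact_mod_cast card_le_card hBw
      exact BlockRR.rowS₂_mem_Icc hΔ hE.le hβ₀ hγ₀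
        (BlockRR.beta_le_inv hE hb₀ l.cast_nonneg hs₂₀ hs)
        (BlockRR.inv_le_mul_beta hE hb₀ l.cast_nonneg hs₂₀ (by linarith))
  exact (hcol y hy).2.trans (mul_le_mul_of_nonneg_left (hcol y' hy').1 (Real.exp_pos ε).le)

/-- Theorem 3.2: the BlockRR mechanism satisfies ε-label differential privacy. -/
theorem blockRR_label_dp {α : Type*} [DecidableEq α]
    (S₁ S₂ T₁ T₂ Δ : Finset α)
    (hS : Disjoint S₁ S₂) (hT : Disjoint T₁ T₂)
    (hTcard : 1 ≤ (T₁ ∪ T₂).card)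
    (ε : ℝ) (hε : 0 < ε) (b l : ℕ) (hb : 1 ≤ b)
    (B : α → Finset α)
    (hB₁ : ∀ y ∈ S₁, B y ⊆ T₁ ∧ (B y).card = b)
    (hB₂ : ∀ y ∈ S₂, B y ⊆ T₂ ∧ (B y).card = b)
    (hΔ : Δ ⊆ T₁) (hΔcard : Δ.card = l)
    (s₁ s₂ s κ β γ : ℝ)
    (hs₁ : s₁ = T₁.card) (hs₂ : s₂ = T₂.card) (hsdef : s = s₁ + s₂)
    (hκ : κ = (Real.exp ε * b + s₁ - b) * (Real.exp ε * b + s₂ - b) - (s₁ - l) * s₂)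
    (hβ : β = ((Real.exp ε - 1) * b + l * s₂ / s) / κ)
    (hγ : γ = (((Real.exp ε - 1) * b + l) - (l / s) * ((Real.exp ε - 1) * b + s₁)) / κ)
    (p : α → α → ℝ)
    (hp : ∀ y ∈ S₁ ∪ S₂, ∀ z ∈ T₁ ∪ T₂,
      p y z = if y ∈ S₁ then
          (if z ∈ B y then Real.exp ε * β else if z ∈ T₁ then β else γ)
        else
          (if z ∈ Δ then 1 / s else if z ∈ T₁ then β
            else if z ∈ B y then Real.exp ε * γ else γ)) :
    ∀ y ∈ S₁ ∪ S₂, ∀ y' ∈ S₁ ∪ S₂, ∀ z ∈ T₁ ∪ T₂,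
      p y z ≤ Real.exp ε * p y' z :=
  blockRR_label_dp_general S₁ S₂ T₁ T₂ Δ ε hε b l hb B hB₁ hB₂ hΔ hΔcard s₁ s₂ s κ β γ hs₁ hs₂ hsdef
    hκ hβ hγ p hp
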